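/- arXiv:1703.03922 — 5 statements merged into one kernel-verified Lean document; each statement's English description precedes it below -/
import Mathlib

section
/- Let a < x be real numbers, μ > 0, let k : (0,∞) → ℝ be integrable on (0, x−a), and let φ : [a,x] → ℝ be bounded and measurable. Then the iterated integral ∫_a^x k(x−t) (I^μ_{a+} φ)(t) dt is absolutely convergent and equals ∫_a^x 𝑘̃(x−u) φ(u) du, where 𝑘̃(s) = (1/Γ(μ)) ∫_0^s (s−r)^{μ−1} k(r) dr. (Kernel form of the paper's Corollary 1: composing the H-kernel operator with the Riemann–Liouville integral replaces the kernel by its Riemann–Liouville integral.) -/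
/-!
The Riemann–Liouville integral is the convolution operator `volterra` with kernel
`s ^ (μ - 1) / Γ(μ)`, and two such operators with lower limit `a` compose as
`volterra k a ∘ volterra j a = volterra (volterra j 0 k) a`. To see this, extend `k`, `j`, `φ` by
zero outside `(0, x - a)`, `(0, x - a)`, `(a, x)`: both sides become iterated integrals over `ℝ²`
of `K (x - t) * J (t - u) * Φ u`, which is absolutely integrable since `K, J ∈ L¹` and
`Φ ∈ L^∞`. Fubini swaps the integrations, and the substitution `r = x - t` turns the new inner
integral into `volterra j 0 k (x - u)`.
-/

open MeasureTheory Set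

/-- The Riemann–Liouville fractional integral `(I^μ_{a+} φ)(x)`. -/
noncomputable def riemannLiouville (μ a : ℝ) (φ : ℝ → ℝ) (x : ℝ) : ℝ :=
  (Real.Gamma μ)⁻¹ * ∫ t in a..x, (x - t) ^ (μ - 1) * φ t

section Convolution

variable {G : Type*} [AddCommGroup G] [MeasurableSpace G] [MeasurableAdd₂ G] [MeasurableNeg G]
  {μ : Measure G} [SFinite μ] [μ.IsAddLeftInvariant] [μ.IsNegInvariant]
  {K J Φ : G → ℝ} {C : ℝ}

theorem integrable_triple_convolution_integrand (x : G) (hK : Integrable K μ)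
    (hJ : Integrable J μ) (hΦm : AEStronglyMeasurable Φ μ) (hΦb : ∀ᵐ u ∂μ, ‖Φ u‖ ≤ C) :
    Integrable (fun p : G × G => K (x - p.1) * J (p.1 - p.2) * Φ p.2) (μ.prod μ) := by
  have hKJ := ((hK.comp_sub_left x).convolution_integrand (ContinuousLinearMap.mul ℝ ℝ)
    hJ.comp_neg).swap
  simp only [Function.comp_def, Prod.fst_swap, Prod.snd_swap, neg_sub,
    ContinuousLinearMap.mul_apply'] at hKJ
  exact hKJ.mul_bdd hΦm.comp_snd (Measure.quasiMeasurePreserving_snd.ae hΦb)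

theorem integrable_mul_integral_convolution (x : G) (hK : Integrable K μ) (hJ : Integrable J μ)
    (hΦm : AEStronglyMeasurable Φ μ) (hΦb : ∀ᵐ u ∂μ, ‖Φ u‖ ≤ C) :
    Integrable (fun t => K (x - t) * ∫ u, J (t - u) * Φ u ∂μ) μ := by
  simpa only [mul_assoc, integral_const_mul] using
    (integrable_triple_convolution_integrand x hK hJ hΦm hΦb).integral_prod_left

theorem integral_mul_integral_convolution_swap (x : G) (hK : Integrable K μ)
    (hJ : Integrable J μ) (hΦm : AEStronglyMeasurable Φ μ) (hΦb : ∀ᵐ u ∂μ, ‖Φ u‖ ≤ C) :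
    ∫ t, K (x - t) * (∫ u, J (t - u) * Φ u ∂μ) ∂μ
      = ∫ u, (∫ r, J (x - u - r) * K r ∂μ) * Φ u ∂μ := by
  calc ∫ t, K (x - t) * (∫ u, J (t - u) * Φ u ∂μ) ∂μ
      = ∫ t, ∫ u, K (x - t) * J (t - u) * Φ u ∂μ ∂μ := by
        simp only [mul_assoc, integral_const_mul]
    _ = ∫ u, ∫ t, K (x - t) * J (t - u) * Φ u ∂μ ∂μ :=
        integral_integral_swap (integrable_triple_convolution_integrand x hK hJ hΦm hΦb)
    _ = ∫ u, (∫ r, J (x - u - r) * K r ∂μ) * Φ u ∂μ := by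
        refine integral_congr_ae (ae_of_all _ fun u => ?_)
        simp only [integral_mul_const]
        rw [← integral_sub_left_eq_self _ μ x]
        simp only [sub_sub_cancel, sub_right_comm x, mul_comm]

end Convolution

noncomputable def volterra (k : ℝ → ℝ) (a : ℝ) (φ : ℝ → ℝ) (x : ℝ) : ℝ :=
  ∫ t in a..x, k (x - t) * φ t

theorem intervalIntegral_eq_integral_indicator_Ioo {a b : ℝ} (hab : a ≤ b) (f : ℝ → ℝ) :
    ∫ t in a..b, f t = ∫ t, (Ioo a b).indicator f t := by
  rw [intervalIntegral.integral_of_le hab, integral_Ioc_eq_integral_Ioo,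
    integral_indicator measurableSet_Ioo]

theorem indicator_Ioo_comp_const_sub (b c x : ℝ) (k : ℝ → ℝ) (t : ℝ) :
    (Ioo b c).indicator k (x - t) = (Ioo (x - c) (x - b)).indicator (fun t => k (x - t)) t := by
  rw [show Ioo (x - c) (x - b) = (x - ·) ⁻¹' Ioo b c by simp]
  exact (indicator_comp_right (x - ·)).symm

theorem integral_indicator_comp_sub_mul_indicator {a b L t : ℝ} (hat : a ≤ t) (htb : t ≤ b)
    (htL : t - a ≤ L) (j φ : ℝ → ℝ) :
    ∫ u, (Ioo 0 L).indicator j (t - u) * (Ioo a b).indicator φ u = volterra j a φ t := by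
  rw [volterra, intervalIntegral_eq_integral_indicator_Ioo hat]
  congr 1 with u
  simp only [indicator_apply, mem_Ioo]
  split_ifs <;> grind

theorem integrableOn_and_volterra_comp_volterra {a x C : ℝ} (hax : a ≤ x) {k j φ : ℝ → ℝ}
    (hk : IntegrableOn k (Ioo 0 (x - a))) (hj : IntegrableOn j (Ioo 0 (x - a)))
    (hφm : AEStronglyMeasurable φ (volume.restrict (Ioo a x)))
    (hφb : ∀ u ∈ Ioo a x, |φ u| ≤ C) :
    IntegrableOn (fun t => k (x - t) * volterra j a φ t) (Ioo a x) ∧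
      volterra k a (volterra j a φ) x = volterra (volterra j 0 k) a φ x := by
  set K := (Ioo 0 (x - a)).indicator k with hK_def
  set J := (Ioo 0 (x - a)).indicator j
  set Φ := (Ioo a x).indicator φ with hΦ_def
  have hK : Integrable K := (integrable_indicator_iff measurableSet_Ioo).2 hk
  have hJ : Integrable J := (integrable_indicator_iff measurableSet_Ioo).2 hj
  have hΦm : AEStronglyMeasurable Φ :=
    (aestronglyMeasurable_indicator_iff measurableSet_Ioo).2 hφm
  have hΦb : ∀ᵐ u, ‖Φ u‖ ≤ max C 0 := ae_of_all _ fun u => by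
    rw [norm_indicator_eq_indicator_norm]
    exact indicator_apply_le' (fun hu => (hφb u hu).trans (le_max_left _ _))
      fun _ => le_max_right _ _
  have hLHS : (fun t => K (x - t) * ∫ u, J (t - u) * Φ u)
      = (Ioo a x).indicator fun t => k (x - t) * volterra j a φ t := by
    funext t
    rw [hK_def, indicator_Ioo_comp_const_sub, sub_zero, sub_sub_cancel]
    by_cases ht : t ∈ Ioo a x
    · rw [indicator_of_mem ht, indicator_of_mem ht,
        integral_indicator_comp_sub_mul_indicator ht.1.le ht.2.le (by linarith [ht.2])]
    · rw [indicator_of_notMem ht, indicator_of_notMem ht, zero_mul]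
  have hRHS : (fun u => (∫ r, J (x - u - r) * K r) * Φ u)
      = (Ioo a x).indicator fun u => volterra j 0 k (x - u) * φ u := by
    funext u
    by_cases hu : u ∈ Ioo a x
    · rw [indicator_of_mem hu, hΦ_def, indicator_of_mem hu,
        integral_indicator_comp_sub_mul_indicator (by linarith [hu.2]) (by linarith [hu.1])
          (by linarith [hu.1])]
    · rw [indicator_of_notMem hu, hΦ_def, indicator_of_notMem hu, mul_zero]
  refine ⟨(integrable_indicator_iff measurableSet_Ioo).1
    (hLHS ▸ integrable_mul_integral_convolution x hK hJ hΦm hΦb), ?_⟩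
  rw [volterra, volterra, intervalIntegral_eq_integral_indicator_Ioo hax,
    intervalIntegral_eq_integral_indicator_Ioo hax, ← hLHS, ← hRHS]
  exact integral_mul_integral_convolution_swap x hK hJ hΦm hΦb

noncomputable def rlKernel (μ s : ℝ) : ℝ :=
  (Real.Gamma μ)⁻¹ * s ^ (μ - 1)

theorem riemannLiouville_eq_volterra (μ a : ℝ) (φ : ℝ → ℝ) :
    riemannLiouville μ a φ = volterra (rlKernel μ) a φ := by
  funext x
  simp only [riemannLiouville, volterra, rlKernel, mul_assoc, intervalIntegral.integral_const_mul]

theorem integrableOn_rlKernel {μ : ℝ} (hμ : 0 < μ) (c : ℝ) :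
    IntegrableOn (rlKernel μ) (Ioo 0 c) :=
  ((intervalIntegral.intervalIntegrable_rpow' (by linarith : -1 < μ - 1)).const_mul
    (Real.Gamma μ)⁻¹).def'.mono_set (Ioo_subset_Ioc_self.trans Ioc_subset_uIoc)

/-- Kernel form of Corollary 1: composing the convolution-kernel operator with the
Riemann–Liouville integral replaces the kernel by its Riemann–Liouville integral;
the iterated integral is absolutely convergent. -/
theorem kernel_comp_riemannLiouville (a x μ : ℝ) (hax : a < x) (hμ : 0 < μ)
    (k φ : ℝ → ℝ)
    (hk : IntegrableOn k (Ioo 0 (x - a)))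
    (hφm : Measurable φ)
    (hφb : ∃ M : ℝ, ∀ t ∈ Icc a x, |φ t| ≤ M) :
    IntegrableOn (fun t => k (x - t) * riemannLiouville μ a φ t) (Ioo a x) ∧
    (∫ t in a..x, k (x - t) * riemannLiouville μ a φ t)
      = ∫ u in a..x,
          ((Real.Gamma μ)⁻¹ * ∫ r in (0:ℝ)..(x - u), (x - u - r) ^ (μ - 1) * k r) * φ u := by
  obtain ⟨M, hM⟩ := hφb
  have h := integrableOn_and_volterra_comp_volterra hax.le hk (integrableOn_rlKernel hμ (x - a))
    hφm.aestronglyMeasurable fun u hu => hM u (Ioo_subset_Icc_self hu)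
  simp only [← riemannLiouville_eq_volterra] at h
  -- `riemannLiouville μ 0 k (x - u)` unfolds to the kernel on the right-hand side
  exact h
end

section
/- Let a < x be real numbers, μ > 0, let k : (0,∞) → ℝ be integrable on (0, x−a), and let φ : [a,x] → ℝ be bounded and measurable. Then (1/Γ(μ)) ∫_a^x (x−t)^{μ−1} (∫_a^t k(t−u) φ(u) du) dt = ∫_a^x 𝑘̃(x−u) φ(u) du, where 𝑘̃(s) = (1/Γ(μ)) ∫_0^s (s−r)^{μ−1} k(r) dr, all integrals being absolutely convergent. (Kernel form of the paper's Corollary 2: the Riemann–Liouville integral of the H-kernel operator is the operator with the Riemann–Liouville-integrated kernel.) -/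
/-!
Extend the kernels by zero outside `(0, x - a)` and `φ` by zero outside `(a, x)`. Both sides are
then iterated integrals over the plane of `(t, u) ↦ k₁ (x - t) * k₂ (t - u) * φ u`, which is
integrable: after the shear `(t, u) ↦ (t, u - t)` it is a product of two integrable functions of
one variable each, times the bounded `φ u`. Fubini swaps the two integrations, and the shift
`t = u + r` turns the inner integral in `t` into the truncated convolution of the kernels at `x - u`.
-/

open MeasureTheory Set

/-- The operator `K_k` with lower limit `a`; `volterraConv k₁ 0 k₂` is the truncated convolution
of two kernels. -/
noncomputable def volterraConv (k : ℝ → ℝ) (a : ℝ) (φ : ℝ → ℝ) (x : ℝ) : ℝ :=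
  ∫ t in a..x, k (x - t) * φ t

noncomputable def iteratedVolterraIntegrand (k₁ k₂ φ : ℝ → ℝ) (a x : ℝ) (p : ℝ × ℝ) : ℝ :=
  (Ioo 0 (x - a)).indicator k₁ (x - p.1) * (Ioo 0 (x - a)).indicator k₂ (p.1 - p.2) *
    (Ioo a x).indicator φ p.2

section

variable {k k₁ k₂ φ : ℝ → ℝ} {a x M : ℝ}

lemma volterraConv_const_mul (c : ℝ) :
    volterraConv (fun s => c * k s) a φ x = c * volterraConv k a φ x := by
  simp only [volterraConv, mul_assoc, intervalIntegral.integral_const_mul]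

lemma volterraConv_eq_integral_indicator {t : ℝ} (hat : a ≤ t) (htx : t ≤ x) :
    volterraConv k a φ t = ∫ u, (Ioo 0 (x - a)).indicator k (t - u) * (Ioo a x).indicator φ u := by
  have hpt : ∀ u, (Ioo 0 (x - a)).indicator k (t - u) * (Ioo a x).indicator φ u
      = (Ioo a t).indicator (fun u => k (t - u) * φ u) u := by
    intro u
    by_cases hu : u ∈ Ioo a t
    · have hku : t - u ∈ Ioo 0 (x - a) := ⟨by linarith [hu.2], by linarith [hu.1]⟩
      have hφu : u ∈ Ioo a x := ⟨hu.1, hu.2.trans_le htx⟩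
      rw [indicator_of_mem hu, indicator_of_mem hku, indicator_of_mem hφu]
    · rw [indicator_of_notMem hu]
      rcases not_and_or.mp hu with hau | hut
      · rw [indicator_of_notMem fun h : u ∈ Ioo a x => hau h.1, mul_zero]
      · rw [indicator_of_notMem fun h : t - u ∈ Ioo 0 (x - a) => hut (by linarith [h.1]), zero_mul]
  rw [funext hpt, integral_indicator measurableSet_Ioo, volterraConv,
    intervalIntegral.integral_of_le hat, integral_Ioc_eq_integral_Ioo]

lemma integrable_iteratedVolterraIntegrand (hk₁ : IntegrableOn k₁ (Ioo 0 (x - a)))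
    (hk₂ : IntegrableOn k₂ (Ioo 0 (x - a))) (hφ : AEStronglyMeasurable φ (volume.restrict (Ioo a x)))
    (hφb : ∀ t ∈ Ioo a x, |φ t| ≤ M) :
    Integrable (iteratedVolterraIntegrand k₁ k₂ φ a x) (volume.prod volume) := by
  have hprod : Integrable (fun q : ℝ × ℝ =>
      (Ioo 0 (x - a)).indicator k₁ (x - q.1) * (Ioo 0 (x - a)).indicator k₂ (-q.2))
      (volume.prod volume) :=
    ((hk₁.integrable_indicator measurableSet_Ioo).comp_sub_left x).mul_prod
      (hk₂.integrable_indicator measurableSet_Ioo).comp_neg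
  have hshear : Integrable (fun p : ℝ × ℝ =>
      (Ioo 0 (x - a)).indicator k₁ (x - p.1) * (Ioo 0 (x - a)).indicator k₂ (p.1 - p.2))
      (volume.prod volume) := by
    simpa only [Function.comp_def, neg_sub] using
      (measurePreserving_prod_sub volume volume).integrable_comp_of_integrable hprod
  have hbound : ∀ u, ‖(Ioo a x).indicator φ u‖ ≤ max M 0 := by
    intro u
    by_cases hu : u ∈ Ioo a x
    · rw [indicator_of_mem hu, Real.norm_eq_abs]
      exact le_max_of_le_left (hφb u hu)
    · simp [indicator_of_notMem hu]
  exact hshear.mul_bdd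
    ((aestronglyMeasurable_indicator_iff measurableSet_Ioo).mpr hφ).comp_snd
    (ae_of_all _ fun p => hbound p.2)

lemma integral_iteratedVolterraIntegrand_left (t : ℝ) :
    ∫ u, iteratedVolterraIntegrand k₁ k₂ φ a x (t, u)
      = (Ioo 0 (x - a)).indicator k₁ (x - t) * (Ioo a x).indicator (volterraConv k₂ a φ) t := by
  simp only [iteratedVolterraIntegrand, mul_assoc]
  rw [integral_const_mul]
  by_cases ht : t ∈ Ioo a x
  · rw [indicator_of_mem ht, volterraConv_eq_integral_indicator ht.1.le ht.2.le]
  · rw [indicator_of_notMem fun h : x - t ∈ Ioo 0 (x - a) =>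
      ht ⟨by linarith [h.2], by linarith [h.1]⟩, zero_mul, zero_mul]

lemma integral_iteratedVolterraIntegrand_right (u : ℝ) :
    ∫ t, iteratedVolterraIntegrand k₁ k₂ φ a x (t, u)
      = (Ioo 0 (x - a)).indicator (volterraConv k₁ 0 k₂) (x - u) * (Ioo a x).indicator φ u := by
  simp only [iteratedVolterraIntegrand]
  rw [integral_mul_const]
  by_cases hu : u ∈ Ioo a x
  · have hconv := volterraConv_eq_integral_indicator (k := k₁) (φ := k₂) (t := x - u)
      (sub_pos.mpr hu.2).le (by linarith [hu.1] : x - u ≤ x - a)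
    rw [sub_zero] at hconv
    have hxu : x - u ∈ Ioo 0 (x - a) := ⟨sub_pos.mpr hu.2, by linarith [hu.1]⟩
    rw [indicator_of_mem hxu, hconv, ← integral_add_right_eq_self _ u]
    simp only [add_sub_cancel_right, sub_add_eq_sub_sub, sub_right_comm x]
  · rw [indicator_of_notMem hu, mul_zero, mul_zero]

theorem volterraConv_volterraConv (hax : a ≤ x) (hk₁ : IntegrableOn k₁ (Ioo 0 (x - a)))
    (hk₂ : IntegrableOn k₂ (Ioo 0 (x - a))) (hφ : AEStronglyMeasurable φ (volume.restrict (Ioo a x)))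
    (hφb : ∀ t ∈ Ioo a x, |φ t| ≤ M) :
    IntegrableOn (fun t => k₁ (x - t) * volterraConv k₂ a φ t) (Ioo a x) ∧
      volterraConv k₁ a (volterraConv k₂ a φ) x = volterraConv (volterraConv k₁ 0 k₂) a φ x := by
  have hH := integrable_iteratedVolterraIntegrand hk₁ hk₂ hφ hφb
  constructor
  · have hleft := hH.integral_prod_left
    simp only [integral_iteratedVolterraIntegrand_left] at hleft
    refine hleft.integrableOn.congr_fun (fun t ht => ?_) measurableSet_Ioo
    dsimp only
    rw [indicator_of_mem ht,
      indicator_of_mem (show x - t ∈ Ioo 0 (x - a) from ⟨by linarith [ht.2], by linarith [ht.1]⟩)]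
  · calc volterraConv k₁ a (volterraConv k₂ a φ) x
        = ∫ t, ∫ u, iteratedVolterraIntegrand k₁ k₂ φ a x (t, u) := by
          simp only [integral_iteratedVolterraIntegrand_left]
          exact volterraConv_eq_integral_indicator hax le_rfl
      _ = ∫ u, ∫ t, iteratedVolterraIntegrand k₁ k₂ φ a x (t, u) := integral_integral_swap hH
      _ = volterraConv (volterraConv k₁ 0 k₂) a φ x := by
          simp only [integral_iteratedVolterraIntegrand_right]
          exact (volterraConv_eq_integral_indicator hax le_rfl).symm

end

/-- Kernel form of Corollary 2: the Riemann–Liouville integral of the convolution-kernel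
operator is the operator with the Riemann–Liouville-integrated kernel; all integrals are
absolutely convergent. -/
theorem riemannLiouville_comp_kernel (a x μ : ℝ) (hax : a < x) (hμ : 0 < μ)
    (k φ : ℝ → ℝ)
    (hk : IntegrableOn k (Ioo 0 (x - a)))
    (hφm : Measurable φ)
    (hφb : ∃ M : ℝ, ∀ t ∈ Icc a x, |φ t| ≤ M) :
    IntegrableOn (fun t => (x - t) ^ (μ - 1) * ∫ u in a..t, k (t - u) * φ u) (Ioo a x) ∧
    (Real.Gamma μ)⁻¹ * (∫ t in a..x, (x - t) ^ (μ - 1) * ∫ u in a..t, k (t - u) * φ u)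
      = ∫ u in a..x,
          ((Real.Gamma μ)⁻¹ * ∫ r in (0:ℝ)..(x - u), (x - u - r) ^ (μ - 1) * k r) * φ u := by
  obtain ⟨M, hM⟩ := hφb
  have hpow : IntegrableOn (fun s : ℝ => s ^ (μ - 1)) (Ioo 0 (x - a)) :=
    (intervalIntegral.integrableOn_Ioo_rpow_iff (sub_pos.mpr hax)).mpr (by linarith)
  obtain ⟨hint, hcomp⟩ := volterraConv_volterraConv hax.le hpow hk hφm.aestronglyMeasurable
    fun t ht => hM t (Ioo_subset_Icc_self ht)
  refine ⟨hint, ?_⟩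
  change (Real.Gamma μ)⁻¹ * volterraConv (· ^ (μ - 1)) a (volterraConv k a φ) x
    = volterraConv (fun s => (Real.Gamma μ)⁻¹ * volterraConv (· ^ (μ - 1)) 0 k s) a φ x
  rw [volterraConv_const_mul, hcomp]
end

section
/- Let x > 0, μ > 0, β > 0, γ > −1, and let φ : [0,x] → ℝ be bounded and measurable. Then (I^β_{0+}(I^{γ,μ}_{0+} φ))(x) = (x^{−μ−γ}/Γ(μ+β)) ∫_0^x u^γ (x−u)^{μ+β−1} [ Σ_{n=0}^∞ ( (μ+γ)_n (β)_n / ((μ+β)_n n!) ) ((x−u)/x)^n ] φ(u) du, all integrals being absolutely convergent. (The paper's Theorem 1 realized for the power kernel: composing a Riemann–Liouville integral with the Erdélyi–Kober-type operator yields an integral operator whose kernel involves the Gauss hypergeometric series ₂F₁(μ+γ, β; μ+β; (x−u)/x).) -/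
open MeasureTheory Set

/-- The Erdélyi–Kober-type operator `(I^{γ,μ}_{0+} φ)(x)`. -/
noncomputable def erdelyiKober (γ μ : ℝ) (φ : ℝ → ℝ) (x : ℝ) : ℝ :=
  x ^ (-μ - γ) * (Real.Gamma μ)⁻¹ * ∫ t in (0:ℝ)..x, t ^ γ * (x - t) ^ (μ - 1) * φ t

/-- The ascending (Pochhammer) factorial `(A)_n = A(A+1)⋯(A+n−1)`. -/
noncomputable def poch (A : ℝ) (n : ℕ) : ℝ := Polynomial.eval A (ascPochhammer ℝ n)

/-!
Both sides are iterated integrals of the same kernel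
`(x - t)^(β-1) t^(-μ-γ) v^γ (t - v)^(μ-1) φ v` over the triangle `0 < v < t < x`. Since `φ` is
bounded, the kernel is absolutely integrable there (the inner `v`-integral is a Beta integral), so
the order of integration can be swapped. The inner `t`-integral is then Euler's integral for
`₂F₁`: expanding `t^(-μ-γ) = x^(-μ-γ) (1 - (x - t)/x)^(-μ-γ)` by the binomial series and
integrating term by term against `(x - t)^(β-1) (t - v)^(μ-1)` gives the Beta integrals
`B(μ, β + n) = B(μ, β) (β)_n / (μ + β)_n`.
-/

open Function ProbabilityTheory

theorem poch_succ (a : ℝ) (n : ℕ) : poch a (n + 1) = poch a n * (a + n) :=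
  ascPochhammer_succ_eval n a

theorem poch_pos {a : ℝ} (ha : 0 < a) (n : ℕ) : 0 < poch a n :=
  ascPochhammer_pos n a ha

theorem poch_le_poch {a b : ℝ} (ha : 0 < a) (hab : a ≤ b) (n : ℕ) : poch a n ≤ poch b n := by
  induction n with
  | zero => simp [poch]
  | succ n ih =>
    rw [poch_succ, poch_succ]
    exact mul_le_mul ih (by linarith) (by positivity) (poch_pos (ha.trans_le hab) n).le

theorem Real.Gamma_add_nat_eq_mul_poch {p : ℝ} (hp : 0 < p) (n : ℕ) :
    Real.Gamma (p + n) = Real.Gamma p * poch p n := by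
  induction n with
  | zero => simp [poch]
  | succ n ih =>
    rw [Nat.cast_succ, ← add_assoc, Real.Gamma_add_one (by positivity), ih, poch_succ]
    ring

theorem ProbabilityTheory.beta_add_nat {p q : ℝ} (hp : 0 < p) (hq : 0 < q) (n : ℕ) :
    beta p (q + n) = beta p q * (poch q n / poch (p + q) n) := by
  have := poch_pos (add_pos hp hq) n
  have := Real.Gamma_pos_of_pos (add_pos hp hq)
  rw [beta, beta, ← add_assoc, Real.Gamma_add_nat_eq_mul_poch hq, Real.Gamma_add_nat_eq_mul_poch (add_pos hp hq)]
  field_simp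

theorem ring_choose_eq_poch_div_factorial (a : ℝ) (n : ℕ) :
    Ring.choose (a + n - 1) n = poch a n / n.factorial := by
  rw [Ring.choose_eq_smul, Polynomial.descPochhammer_smeval_eq_ascPochhammer,
    Polynomial.ascPochhammer_smeval_eq_eval, smul_eq_mul, poch, inv_mul_eq_div]
  ring_nf

theorem hasSum_poch_div_factorial_mul_pow (a : ℝ) {w : ℝ} (hw : |w| < 1) :
    HasSum (fun n => poch a n / n.factorial * w ^ n) ((1 - w) ^ (-a)) := by
  have := (Real.one_div_one_sub_rpow_hasFPowerSeriesOnBall_zero a).hasSum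
    (y := w) (by simpa [Real.enorm_eq_ofReal_abs] using hw)
  simpa [FormalMultilinearSeries.ofScalars_apply_eq, ring_choose_eq_poch_div_factorial, mul_comm,
    Real.rpow_neg (sub_nonneg.2 (abs_lt.1 hw).2.le)] using this

theorem summable_abs_poch_div_factorial_mul_pow (a : ℝ) {w : ℝ} (hw : |w| < 1) :
    Summable (fun n => |poch a n| / n.factorial * |w| ^ n) := by
  have h := Real.one_div_one_sub_rpow_hasFPowerSeriesOnBall_zero a
  have := FormalMultilinearSeries.summable_norm_apply _ (x := w)
    (Metric.eball_subset_eball h.r_le (by simpa [Real.enorm_eq_ofReal_abs] using hw))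
  simpa [FormalMultilinearSeries.ofScalars_apply_eq, ring_choose_eq_poch_div_factorial,
    abs_div, mul_comm] using this

theorem rpow_neg_eq_mul_tsum {a t x : ℝ} (ht : 0 < t) (htx : t ≤ x) :
    t ^ (-a) = x ^ (-a) * ∑' n : ℕ, poch a n / n.factorial * ((x - t) / x) ^ n := by
  have hx := ht.trans_le htx
  have hw : |(x - t) / x| < 1 := by
    rw [abs_of_nonneg (div_nonneg (sub_nonneg.2 htx) hx.le), div_lt_one hx]
    linarith
  rw [(hasSum_poch_div_factorial_mul_pow a hw).tsum_eq,
    show 1 - (x - t) / x = t / x by field_simp; ring, Real.div_rpow ht.le hx.le]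
  field_simp

theorem summable_abs_poch_div_factorial_mul_poch_div_poch {a b c z : ℝ} (hb : 0 < b)
    (hbc : b ≤ c) (hz : |z| < 1) :
    Summable fun n : ℕ => |poch a n / n.factorial| * (poch b n / poch c n * |z| ^ n) := by
  refine Summable.of_nonneg_of_le (fun n => ?_) (fun n => ?_)
    (summable_abs_poch_div_factorial_mul_pow a hz)
  · have := poch_pos hb n
    have := poch_pos (hb.trans_le hbc) n
    positivity
  · rw [abs_div, Nat.abs_cast, mul_left_comm]
    exact mul_le_of_le_one_left (by positivity)
      (div_le_one_of_le₀ (poch_le_poch hb hbc n) (poch_pos (hb.trans_le hbc) n).le)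

theorem integral_rpow_mul_sub_rpow {p q a : ℝ} (hp : 0 < p) (hq : 0 < q) (ha : 0 < a) :
    ∫ v in (0:ℝ)..a, v ^ (p - 1) * (a - v) ^ (q - 1) = a ^ (p + q - 1) * beta p q := by
  apply Complex.ofReal_injective
  have hcast : ∀ v ∈ uIcc 0 a, ((v ^ (p - 1) * (a - v) ^ (q - 1) : ℝ) : ℂ)
      = (v : ℂ) ^ ((p : ℂ) - 1) * ((a : ℂ) - v) ^ ((q : ℂ) - 1) := by
    intro v hv
    rw [uIcc_of_le ha.le] at hv
    push_cast [Complex.ofReal_cpow hv.1, Complex.ofReal_cpow (sub_nonneg.2 hv.2)]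
    rfl
  rw [← intervalIntegral.integral_ofReal, intervalIntegral.integral_congr hcast,
    Complex.betaIntegral_scaled _ _ ha,
    Complex.betaIntegral_eq_Gamma_mul_div _ _ (by simpa) (by simpa)]
  push_cast [beta, Complex.ofReal_cpow ha.le, ← Complex.Gamma_ofReal]
  ring_nf

section Beta

variable {p q u x : ℝ}

theorem integral_Ioo_sub_rpow_mul_sub_rpow (hp : 0 < p) (hq : 0 < q) (hux : u < x) :
    ∫ t in Ioo u x, (t - u) ^ (p - 1) * (x - t) ^ (q - 1) =
      (x - u) ^ (p + q - 1) * beta p q := by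
  have h := intervalIntegral.integral_comp_sub_right
    (fun s => s ^ (p - 1) * ((x - u) - s) ^ (q - 1)) (a := u) (b := x) u
  simp only [sub_sub_sub_cancel_right, sub_self] at h
  rw [← integral_Ioc_eq_integral_Ioo, ← intervalIntegral.integral_of_le hux.le, h,
    integral_rpow_mul_sub_rpow hp hq (sub_pos.2 hux)]

theorem integrableOn_Ioo_sub_rpow_mul_sub_rpow (hp : 0 < p) (hq : 0 < q) (hux : u < x) :
    IntegrableOn (fun t => (t - u) ^ (p - 1) * (x - t) ^ (q - 1)) (Ioo u x) := by
  apply Integrable.of_integral_ne_zero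
  rw [integral_Ioo_sub_rpow_mul_sub_rpow hp hq hux]
  have := beta_pos hp hq
  have := Real.rpow_pos_of_pos (sub_pos.2 hux) (p + q - 1)
  positivity

theorem integrableOn_Ioo_rpow_mul_sub_rpow {γ μ t : ℝ} (hγ : -1 < γ) (hμ : 0 < μ) (ht : 0 < t) :
    IntegrableOn (fun v => v ^ γ * (t - v) ^ (μ - 1)) (Ioo 0 t) := by
  simpa using integrableOn_Ioo_sub_rpow_mul_sub_rpow (p := γ + 1) (by linarith) hμ ht

theorem integral_Ioo_rpow_mul_sub_rpow {γ μ t : ℝ} (hγ : -1 < γ) (hμ : 0 < μ) (ht : 0 < t) :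
    ∫ v in Ioo 0 t, v ^ γ * (t - v) ^ (μ - 1) = t ^ (γ + μ) * beta (γ + 1) μ := by
  simpa [show γ + 1 + μ - 1 = γ + μ by ring] using
    integral_Ioo_sub_rpow_mul_sub_rpow (p := γ + 1) (by linarith) hμ ht

end Beta

section Moments

variable {μ β u x : ℝ}

theorem eqOn_rpow_mul_rpow_mul_div_pow (n : ℕ) :
    EqOn (fun t => (x - t) ^ (β - 1) * (t - u) ^ (μ - 1) * ((x - t) / x) ^ n)
      (fun t => (x ^ n)⁻¹ * ((t - u) ^ (μ - 1) * (x - t) ^ ((β + n) - 1))) (Ioo u x) := by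
  intro t ht
  dsimp only
  rw [div_pow, show β + n - 1 = (β - 1) + n by ring, Real.rpow_add (sub_pos.2 ht.2),
    Real.rpow_natCast]
  ring

theorem integrableOn_rpow_mul_rpow_mul_div_pow (hμ : 0 < μ) (hβ : 0 < β) (hux : u < x) (n : ℕ) :
    IntegrableOn (fun t => (x - t) ^ (β - 1) * (t - u) ^ (μ - 1) * ((x - t) / x) ^ n)
      (Ioo u x) :=
  IntegrableOn.congr_fun
    ((integrableOn_Ioo_sub_rpow_mul_sub_rpow hμ (by positivity) hux).const_mul _)
    (eqOn_rpow_mul_rpow_mul_div_pow n).symm measurableSet_Ioo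

theorem integral_rpow_mul_rpow_mul_div_pow (hμ : 0 < μ) (hβ : 0 < β) (hux : u < x) (n : ℕ) :
    ∫ t in Ioo u x, (x - t) ^ (β - 1) * (t - u) ^ (μ - 1) * ((x - t) / x) ^ n =
      (x - u) ^ (μ + β - 1) * beta μ β * (poch β n / poch (μ + β) n * ((x - u) / x) ^ n) := by
  rw [setIntegral_congr_fun measurableSet_Ioo (eqOn_rpow_mul_rpow_mul_div_pow n),
    integral_const_mul, integral_Ioo_sub_rpow_mul_sub_rpow hμ (by positivity) hux,
    beta_add_nat hμ hβ, show μ + (β + n) - 1 = (μ + β - 1) + n by ring,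
    Real.rpow_add (sub_pos.2 hux), Real.rpow_natCast, div_pow]
  ring

end Moments

theorem integral_mul_tsum_mul_pow {α : Type*} [MeasurableSpace α] {μ : Measure α}
    {w f : α → ℝ} {c : ℕ → ℝ} (h0 : ∀ᵐ t ∂μ, 0 ≤ w t ∧ 0 ≤ f t)
    (hint : ∀ n, Integrable (fun t => w t * f t ^ n) μ)
    (hsum : Summable fun n => |c n| * ∫ t, w t * f t ^ n ∂μ) :
    ∫ t, w t * ∑' n, c n * f t ^ n ∂μ = ∑' n, c n * ∫ t, w t * f t ^ n ∂μ := by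
  have hnorm (n : ℕ) : ∫ t, ‖c n * (w t * f t ^ n)‖ ∂μ = |c n| * ∫ t, w t * f t ^ n ∂μ := by
    rw [← integral_const_mul]
    refine integral_congr_ae ?_
    filter_upwards [h0] with t ⟨hw, hf⟩
    rw [norm_mul, Real.norm_eq_abs, Real.norm_of_nonneg (by positivity)]
  calc ∫ t, w t * ∑' n, c n * f t ^ n ∂μ = ∫ t, ∑' n, c n * (w t * f t ^ n) ∂μ := by
        simp_rw [← tsum_mul_left, mul_left_comm]
    _ = ∑' n, ∫ t, c n * (w t * f t ^ n) ∂μ :=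
        (integral_tsum_of_summable_integral_norm (fun n => (hint n).const_mul (c n))
          (by simpa only [hnorm] using hsum)).symm
    _ = ∑' n, c n * ∫ t, w t * f t ^ n ∂μ := by simp_rw [integral_const_mul]

noncomputable def gaussHypergeometric (a b c z : ℝ) : ℝ :=
  ∑' n : ℕ, poch a n * poch b n / (poch c n * (n.factorial : ℝ)) * z ^ n

theorem integral_rpow_mul_rpow_mul_rpow_neg {a μ β u x : ℝ} (hμ : 0 < μ) (hβ : 0 < β)
    (hu : 0 < u) (hux : u < x) :
    ∫ t in Ioo u x, (x - t) ^ (β - 1) * (t - u) ^ (μ - 1) * t ^ (-a) =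
      x ^ (-a) * (x - u) ^ (μ + β - 1) * beta μ β *
        gaussHypergeometric a β (μ + β) ((x - u) / x) := by
  have hx : 0 < x := hu.trans hux
  have hz : 0 ≤ (x - u) / x := div_nonneg (sub_pos.2 hux).le hx.le
  have hz1 : |(x - u) / x| < 1 := by
    rw [abs_of_nonneg hz, div_lt_one hx]
    linarith
  have h0 : ∀ᵐ t ∂(volume.restrict (Ioo u x)),
      0 ≤ (x - t) ^ (β - 1) * (t - u) ^ (μ - 1) ∧ 0 ≤ (x - t) / x := by
    refine ae_restrict_of_forall_mem measurableSet_Ioo fun t ht => ?_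
    have := sub_pos.2 ht.1
    have := sub_pos.2 ht.2
    constructor <;> positivity
  have hsum : Summable fun n : ℕ => |poch a n / n.factorial| *
      ∫ t in Ioo u x, (x - t) ^ (β - 1) * (t - u) ^ (μ - 1) * ((x - t) / x) ^ n := by
    have := summable_abs_poch_div_factorial_mul_poch_div_poch (a := a) (c := μ + β) hβ
      (by linarith) hz1
    refine (this.mul_left ((x - u) ^ (μ + β - 1) * beta μ β)).congr fun n => ?_
    rw [abs_of_nonneg hz, integral_rpow_mul_rpow_mul_div_pow hμ hβ hux]
    ring
  rw [setIntegral_congr_fun measurableSet_Ioo fun t ht => by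
      rw [rpow_neg_eq_mul_tsum (hu.trans ht.1) ht.2.le, mul_left_comm],
    integral_const_mul, integral_mul_tsum_mul_pow h0
      (integrableOn_rpow_mul_rpow_mul_div_pow hμ hβ hux) hsum]
  simp_rw [integral_rpow_mul_rpow_mul_div_pow hμ hβ hux, gaussHypergeometric]
  conv_lhs => rw [← tsum_mul_left]
  conv_rhs => rw [← tsum_mul_left]
  congr 1 with n
  ring

def triangle (a b : ℝ) : Set (ℝ × ℝ) := {p | a < p.2 ∧ p.2 < p.1 ∧ p.1 < b}

theorem measurableSet_triangle (a b : ℝ) : MeasurableSet (triangle a b) :=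
  (measurableSet_lt measurable_const measurable_snd).inter
    ((measurableSet_lt measurable_snd measurable_fst).inter
      (measurableSet_lt measurable_fst measurable_const))

section Triangle

variable {E : Type*} [NormedAddCommGroup E] {a b : ℝ} {F : ℝ → ℝ → E}

theorem indicator_triangle_eq_left (t v : ℝ) :
    (triangle a b).indicator (uncurry F) (t, v) =
      (Ioo a b).indicator (fun t => (Ioo a t).indicator (F t) v) t := by
  by_cases ht : t ∈ Ioo a b <;> by_cases hv : v ∈ Ioo a t <;>
    simp_all [indicator_apply, triangle]; grind

theorem indicator_triangle_eq_right (t v : ℝ) :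
    (triangle a b).indicator (uncurry F) (t, v) =
      (Ioo a b).indicator (fun v => (Ioo v b).indicator (fun t => F t v) t) v := by
  by_cases hv : v ∈ Ioo a b <;> by_cases ht : t ∈ Ioo v b <;>
    simp_all [indicator_apply, triangle]; grind

theorem integral_indicator_triangle_left [NormedSpace ℝ E] (t : ℝ) :
    ∫ v, (triangle a b).indicator (uncurry F) (t, v) =
      (Ioo a b).indicator (fun t => ∫ v in Ioo a t, F t v) t := by
  simp_rw [indicator_triangle_eq_left]
  by_cases ht : t ∈ Ioo a b <;> simp [ht, integral_indicator measurableSet_Ioo]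

theorem integral_indicator_triangle_right [NormedSpace ℝ E] (v : ℝ) :
    ∫ t, (triangle a b).indicator (uncurry F) (t, v) =
      (Ioo a b).indicator (fun v => ∫ t in Ioo v b, F t v) v := by
  simp_rw [indicator_triangle_eq_right]
  by_cases hv : v ∈ Ioo a b <;> simp [hv, integral_indicator measurableSet_Ioo]

theorem integrableOn_triangle
    (hFm : AEStronglyMeasurable (uncurry F) (volume.restrict (triangle a b)))
    (h_slice : ∀ t ∈ Ioo a b, IntegrableOn (F t) (Ioo a t))
    (h_norm : IntegrableOn (fun t => ∫ v in Ioo a t, ‖F t v‖) (Ioo a b)) :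
    IntegrableOn (uncurry F) (triangle a b) := by
  rw [← integrable_indicator_iff (measurableSet_triangle a b), Measure.volume_eq_prod,
    integrable_prod_iff ((aestronglyMeasurable_indicator_iff (measurableSet_triangle a b)).2 hFm)]
  refine ⟨.of_forall fun t => ?_, ?_⟩
  · simp_rw [indicator_triangle_eq_left]
    by_cases ht : t ∈ Ioo a b
    · simpa [ht] using (h_slice t ht).integrable_indicator measurableSet_Ioo
    · simp [ht]
  · simp_rw [norm_indicator_eq_indicator_norm]
    have := integral_indicator_triangle_left (a := a) (b := b) (F := fun t v => ‖F t v‖)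
    exact ((integrable_indicator_iff measurableSet_Ioo).2 h_norm).congr
      (.of_forall fun t => (this t).symm)

theorem MeasureTheory.IntegrableOn.integrableOn_integral_Ioo_left [NormedSpace ℝ E]
    (hF : IntegrableOn (uncurry F) (triangle a b)) :
    IntegrableOn (fun t => ∫ v in Ioo a t, F t v) (Ioo a b) := by
  rw [← integrable_indicator_iff measurableSet_Ioo]
  rw [← integrable_indicator_iff (measurableSet_triangle a b), Measure.volume_eq_prod] at hF
  simpa only [integral_indicator_triangle_left] using hF.integral_prod_left

theorem MeasureTheory.IntegrableOn.integrableOn_integral_Ioo_right [NormedSpace ℝ E]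
    (hF : IntegrableOn (uncurry F) (triangle a b)) :
    IntegrableOn (fun v => ∫ t in Ioo v b, F t v) (Ioo a b) := by
  rw [← integrable_indicator_iff measurableSet_Ioo]
  rw [← integrable_indicator_iff (measurableSet_triangle a b), Measure.volume_eq_prod] at hF
  simpa only [integral_indicator_triangle_right] using hF.integral_prod_right

theorem integral_Ioo_integral_Ioo_swap [NormedSpace ℝ E]
    (hF : IntegrableOn (uncurry F) (triangle a b)) :
    ∫ t in Ioo a b, ∫ v in Ioo a t, F t v = ∫ v in Ioo a b, ∫ t in Ioo v b, F t v := by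
  rw [← integrable_indicator_iff (measurableSet_triangle a b), Measure.volume_eq_prod] at hF
  rw [← integral_indicator measurableSet_Ioo, ← integral_indicator measurableSet_Ioo]
  simp_rw [← integral_indicator_triangle_left, ← integral_indicator_triangle_right]
  exact integral_integral_swap hF

end Triangle

section Kernel

variable {x μ β γ : ℝ}

noncomputable def compositionKernel (x μ β γ : ℝ) (φ : ℝ → ℝ) (t v : ℝ) : ℝ :=
  (x - t) ^ (β - 1) * t ^ (-μ - γ) * (v ^ γ * (t - v) ^ (μ - 1) * φ v)

theorem measurable_compositionKernel {φ : ℝ → ℝ} (hφ : Measurable φ) :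
    Measurable (uncurry (compositionKernel x μ β γ φ)) := by
  unfold compositionKernel
  fun_prop

theorem compositionKernel_one_nonneg {t v : ℝ} (hv : 0 < v) (hvt : v < t) (htx : t < x) :
    0 ≤ compositionKernel x μ β γ 1 t v := by
  have := sub_pos.2 hvt
  have := sub_pos.2 htx
  have := hv.trans hvt
  simp only [compositionKernel, Pi.one_apply, mul_one]
  positivity

theorem integral_norm_compositionKernel_one (hμ : 0 < μ) (hγ : -1 < γ) {t : ℝ} (ht : 0 < t)
    (htx : t < x) :
    ∫ v in Ioo 0 t, ‖compositionKernel x μ β γ 1 t v‖ = beta (γ + 1) μ * (x - t) ^ (β - 1) := by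
  rw [setIntegral_congr_fun measurableSet_Ioo fun v hv =>
      Real.norm_of_nonneg (compositionKernel_one_nonneg hv.1 hv.2 htx)]
  simp only [compositionKernel, Pi.one_apply, mul_one]
  rw [integral_const_mul, integral_Ioo_rpow_mul_sub_rpow hγ hμ ht]
  have h1 : t ^ (-μ - γ) * t ^ (γ + μ) = 1 := by
    rw [← Real.rpow_add ht, show -μ - γ + (γ + μ) = 0 by ring, Real.rpow_zero]
  linear_combination (beta (γ + 1) μ * (x - t) ^ (β - 1)) * h1

theorem integrableOn_compositionKernel_one (hμ : 0 < μ) (hβ : 0 < β) (hγ : -1 < γ) :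
    IntegrableOn (uncurry (compositionKernel x μ β γ 1)) (triangle 0 x) := by
  have hpow : IntegrableOn (fun t => (x - t) ^ (β - 1)) (Ioo 0 x) := by
    rcases le_or_gt x 0 with hx | hx
    · simp [Ioo_eq_empty hx.not_gt]
    · simpa using integrableOn_Ioo_sub_rpow_mul_sub_rpow (p := 1) one_pos hβ hx
  refine integrableOn_triangle (measurable_compositionKernel measurable_const).aestronglyMeasurable
    (fun t ht => ?_) ?_
  · refine IntegrableOn.congr_fun ((integrableOn_Ioo_rpow_mul_sub_rpow hγ hμ ht.1).const_mul
      ((x - t) ^ (β - 1) * t ^ (-μ - γ))) (fun v _ => ?_) measurableSet_Ioo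
    simp [compositionKernel]
  · exact IntegrableOn.congr_fun (hpow.const_mul _)
      (fun t ht => (integral_norm_compositionKernel_one hμ hγ ht.1 ht.2).symm) measurableSet_Ioo

theorem integrableOn_compositionKernel {M : ℝ} {φ : ℝ → ℝ} (hμ : 0 < μ) (hβ : 0 < β)
    (hγ : -1 < γ) (hφ : Measurable φ) (hM : ∀ v ∈ Icc 0 x, |φ v| ≤ M) :
    IntegrableOn (uncurry (compositionKernel x μ β γ φ)) (triangle 0 x) := by
  refine ((integrableOn_compositionKernel_one hμ hβ hγ).const_mul M).mono'
    (measurable_compositionKernel hφ).aestronglyMeasurable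
    (ae_restrict_of_forall_mem (measurableSet_triangle 0 x) fun p ⟨hv, hvt, htx⟩ => ?_)
  have hK := compositionKernel_one_nonneg (μ := μ) (β := β) (γ := γ) hv hvt htx
  rw [show uncurry (compositionKernel x μ β γ φ) p = compositionKernel x μ β γ 1 p.1 p.2 * φ p.2 by
      simp only [uncurry, compositionKernel, Pi.one_apply]; ring,
    norm_mul, Real.norm_of_nonneg hK, mul_comm]
  exact mul_le_mul_of_nonneg_right (hM _ ⟨hv.le, by linarith⟩) hK

theorem mul_erdelyiKober_eq_integral_compositionKernel (φ : ℝ → ℝ) {t : ℝ} (ht : 0 ≤ t) :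
    (x - t) ^ (β - 1) * erdelyiKober γ μ φ t =
      (Real.Gamma μ)⁻¹ * ∫ v in Ioo 0 t, compositionKernel x μ β γ φ t v := by
  simp only [erdelyiKober, compositionKernel]
  rw [integral_const_mul, intervalIntegral.integral_of_le ht, integral_Ioc_eq_integral_Ioo]
  ring

theorem integral_compositionKernel_eq_gaussHypergeometric (hμ : 0 < μ) (hβ : 0 < β)
    (φ : ℝ → ℝ) {v : ℝ} (hv : 0 < v) (hvx : v < x) :
    ∫ t in Ioo v x, compositionKernel x μ β γ φ t v = x ^ (-μ - γ) * beta μ β *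
      (v ^ γ * (x - v) ^ (μ + β - 1) * gaussHypergeometric (μ + γ) β (μ + β) ((x - v) / x) *
        φ v) := by
  have h := integral_rpow_mul_rpow_mul_rpow_neg (a := μ + γ) hμ hβ hv hvx
  rw [neg_add'] at h
  calc ∫ t in Ioo v x, compositionKernel x μ β γ φ t v
      = (∫ t in Ioo v x, (x - t) ^ (β - 1) * (t - v) ^ (μ - 1) * t ^ (-μ - γ)) *
          (v ^ γ * φ v) := by
        rw [← integral_mul_const]
        congr 1 with t
        simp only [compositionKernel]
        ring
    _ = _ := by rw [h]; ring

end Kernel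

/-- Theorem 1 for the power kernel: a Riemann–Liouville integral composed with the
Erdélyi–Kober-type operator gives an integral operator whose kernel involves the
Gauss hypergeometric series `₂F₁(μ+γ, β; μ+β; (x−u)/x)`. -/
theorem riemannLiouville_comp_erdelyiKober (x μ β γ : ℝ)
    (hx : 0 < x) (hμ : 0 < μ) (hβ : 0 < β) (hγ : -1 < γ) (φ : ℝ → ℝ)
    (hφm : Measurable φ)
    (hφb : ∃ M : ℝ, ∀ t ∈ Icc 0 x, |φ t| ≤ M) :
    IntegrableOn (fun t => (x - t) ^ (β - 1) * erdelyiKober γ μ φ t) (Ioo 0 x) ∧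
    IntegrableOn
      (fun u =>
        u ^ γ * (x - u) ^ (μ + β - 1) *
          (∑' n : ℕ,
            poch (μ + γ) n * poch β n / (poch (μ + β) n * (n.factorial : ℝ)) *
              ((x - u) / x) ^ n) * φ u) (Ioo 0 x) ∧
    riemannLiouville β 0 (erdelyiKober γ μ φ) x
      = x ^ (-μ - γ) * (Real.Gamma (μ + β))⁻¹ *
          ∫ u in (0:ℝ)..x,
            u ^ γ * (x - u) ^ (μ + β - 1) *
              (∑' n : ℕ,
                poch (μ + γ) n * poch β n / (poch (μ + β) n * (n.factorial : ℝ)) *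
                  ((x - u) / x) ^ n) * φ u := by
  obtain ⟨M, hM⟩ := hφb
  have hK := integrableOn_compositionKernel hμ hβ hγ hφm hM
  have hleft : ∀ t ∈ Ioo 0 x, _ := fun t ht =>
    mul_erdelyiKober_eq_integral_compositionKernel (x := x) (μ := μ) (β := β) (γ := γ) φ ht.1.le
  have hright : ∀ v ∈ Ioo 0 x, _ := fun v hv =>
    integral_compositionKernel_eq_gaussHypergeometric (γ := γ) hμ hβ φ hv.1 hv.2
  unfold gaussHypergeometric at hright
  have hC : x ^ (-μ - γ) * beta μ β ≠ 0 :=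
    (mul_pos (Real.rpow_pos_of_pos hx _) (beta_pos hμ hβ)).ne'
  refine ⟨?_, ?_, ?_⟩
  · exact IntegrableOn.congr_fun (hK.integrableOn_integral_Ioo_left.const_mul _)
      (fun t ht => (hleft t ht).symm) measurableSet_Ioo
  · exact IntegrableOn.congr_fun (hK.integrableOn_integral_Ioo_right.const_mul _)
      (fun v hv => by rw [hright v hv, inv_mul_cancel_left₀ hC]) measurableSet_Ioo
  · rw [riemannLiouville, intervalIntegral.integral_of_le hx.le, integral_Ioc_eq_integral_Ioo,
      intervalIntegral.integral_of_le hx.le, integral_Ioc_eq_integral_Ioo,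
      setIntegral_congr_fun measurableSet_Ioo hleft, integral_const_mul,
      integral_Ioo_integral_Ioo_swap hK, setIntegral_congr_fun measurableSet_Ioo hright,
      integral_const_mul, beta]
    have := (Real.Gamma_pos_of_pos hμ).ne'
    field_simp
end

section
/- Let a < b be real numbers, μ > 0, and set n = ⌊μ⌋ + 1. Let k : (0,∞) → ℝ be integrable on (0, b−a), and define κ(s) = (1/Γ(n−μ)) ∫_0^s (s−r)^{n−μ−1} k(r) dr for s > 0. Assume κ extends to an n-times continuously differentiable function on [0, b−a) with κ^{(j)}(0) = 0 for all 0 ≤ j ≤ n−1, and let φ : [a,b] → ℝ be continuous. Then for every x ∈ (a,b), the function x ↦ (I^{n−μ}_{a+}(K_k φ))(x) is n times differentiable at x and its n-th derivative equals ∫_a^x κ^{(n)}(x−u) φ(u) du; that is, (D^μ_{a+}(K_k φ))(x) = (K_{κ^{(n)}} φ)(x). (Kernel form of the paper's Theorem 3: the Riemann–Liouville fractional derivative of the H-kernel operator is the operator with the fractionally differentiated kernel.) -/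
/-! Put `ν = n - μ`, which is positive. Since `I^ν_{a+}` is the kernel operator with kernel
`s^{ν-1} / Γ(ν)`, and kernel operators compose by convolving their kernels (Fubini on the
triangle `a < u < t < y`), we get `I^ν_{a+} (K_k φ) = K_κ φ` with `κ = I^ν_{0+} k`.
If `κ(0) = 0`, the fundamental theorem of calculus for `κ` and another Fubini step show that
`K_κ φ` is a primitive of the continuous function `K_{κ'} φ`; hence `(K_κ φ)' = K_{κ'} φ`.
Iterating this `n` times, using `κ^{(j)}(0) = 0` for `j < n`, gives the result. -/

open MeasureTheory Set

/-- The convolution-type operator `(K_k φ)(x) = ∫_a^x k(x−t) φ(t) dt`. -/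
noncomputable def kernelOp (a : ℝ) (k φ : ℝ → ℝ) (x : ℝ) : ℝ :=
  ∫ t in a..x, k (x - t) * φ t

open Filter intervalIntegral Function Topology

theorem integral_integral_swap_triangle {E : Type*} [NormedAddCommGroup E] [NormedSpace ℝ E]
    {F : ℝ → ℝ → E} {a y : ℝ} (hay : a ≤ y)
    (hF : IntegrableOn (uncurry F) {p : ℝ × ℝ | a ≤ p.2 ∧ p.2 ≤ p.1 ∧ p.1 ≤ y}) :
    ∫ t in a..y, ∫ u in a..t, F t u = ∫ u in a..y, ∫ t in u..y, F t u := by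
  set G : ℝ → ℝ → E := fun t u => (Iic t).indicator (F t) u
  have hD : MeasurableSet {p : ℝ × ℝ | p.2 ≤ p.1} :=
    measurableSet_le measurable_snd measurable_fst
  have hG : Integrable (uncurry G)
      ((volume.restrict (Ioc a y)).prod (volume.restrict (Ioc a y))) := by
    have hGF : uncurry G = {p : ℝ × ℝ | p.2 ≤ p.1}.indicator (uncurry F) := by
      ext ⟨t, u⟩; rfl
    rw [Measure.prod_restrict, hGF, ← Measure.volume_eq_prod, integrable_indicator_iff hD,
      IntegrableOn, Measure.restrict_restrict hD]
    exact hF.mono_set fun p ⟨hle, ht, hu⟩ => ⟨hu.1.le, hle, ht.2⟩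
  have hinner : ∀ t ∈ Ioc a y, ∫ u in a..t, F t u = ∫ u in Ioc a y, G t u := fun t ht => by
    rw [setIntegral_indicator measurableSet_Iic, Ioc_inter_Iic, min_eq_right ht.2,
      integral_of_le ht.1.le]
  have houter : ∀ u ∈ Ioc a y, ∫ t in u..y, F t u = ∫ t in Ioc a y, G t u := fun u hu => by
    have hG_Ici : ∀ t, G t u = (Ici u).indicator (F · u) t := fun t => by
      simp only [G, indicator, mem_Iic, mem_Ici]
    simp only [hG_Ici]
    have hIcc : Ioc a y ∩ Ici u = Icc u y := by
      ext t
      exact ⟨fun ⟨⟨_, hty⟩, hut⟩ => ⟨hut, hty⟩,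
        fun ⟨hut, hty⟩ => ⟨⟨hu.1.trans_le hut, hty⟩, hut⟩⟩
    rw [setIntegral_indicator measurableSet_Ici, hIcc, integral_Icc_eq_integral_Ioc,
      integral_of_le hu.2]
  rw [integral_of_le hay, integral_of_le hay, setIntegral_congr_fun measurableSet_Ioc hinner,
    setIntegral_congr_fun measurableSet_Ioc houter]
  exact integral_integral_swap hG

theorem ContinuousOn.exists_bounded_continuous_eqOn_Icc {E : Type*} [NormedAddCommGroup E]
    {f : ℝ → E} {a b : ℝ} (hab : a ≤ b) (hf : ContinuousOn f (Icc a b)) :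
    ∃ g : ℝ → E, Continuous g ∧ EqOn f g (Icc a b) ∧ ∃ C, ∀ x, ‖g x‖ ≤ C := by
  obtain ⟨C, hC⟩ := isCompact_Icc.exists_bound_of_continuousOn hf
  exact ⟨IccExtend hab ((Icc a b).domRestrict f),
    continuous_IccExtend_iff.2 (continuousOn_iff_continuous_domRestrict.1 hf),
    fun x hx => (IccExtend_of_mem hab ((Icc a b).domRestrict f) hx).symm,
    C, fun x => hC _ (projIcc a b hab x).2⟩

theorem integral_derivWithin_Ico_eq_sub {E : Type*} [NormedAddCommGroup E] [NormedSpace ℝ E]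
    [CompleteSpace E] {f : ℝ → E} {a c s : ℝ} (hf : DifferentiableOn ℝ f (Ico a c))
    (hf' : ContinuousOn (derivWithin f (Ico a c)) (Ico a c)) (hs : s ∈ Ico a c) :
    ∫ r in a..s, derivWithin f (Ico a c) r = f s - f a := by
  have hsub : Icc a s ⊆ Ico a c := Icc_subset_Ico_right hs.2
  refine integral_eq_sub_of_hasDerivAt_of_le hs.1 (hf.continuousOn.mono hsub) (fun r hr => ?_)
    ((hf'.mono hsub).intervalIntegrable_of_Icc hs.1)
  have hnhds : Ico a c ∈ 𝓝 r := Ico_mem_nhds hr.1 (hr.2.trans hs.2)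
  rw [derivWithin_of_mem_nhds hnhds]
  exact ((hf r (mem_of_mem_nhds hnhds)).differentiableAt hnhds).hasDerivAt

theorem kernelOp_congr {a y : ℝ} (hay : a ≤ y) {k k' φ φ' : ℝ → ℝ}
    (hk : EqOn k k' (Ioo 0 (y - a))) (hφ : EqOn φ φ' (Ioo a y)) :
    kernelOp a k φ y = kernelOp a k' φ' y := by
  rw [kernelOp, kernelOp, integral_of_le hay, integral_of_le hay, integral_Ioc_eq_integral_Ioo,
    integral_Ioc_eq_integral_Ioo]
  refine setIntegral_congr_fun measurableSet_Ioo fun t ht => ?_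
  rw [hk ⟨sub_pos.2 ht.2, by linarith [ht.1]⟩, hφ ht]

theorem const_mul_kernelOp (c a : ℝ) (k φ : ℝ → ℝ) (x : ℝ) :
    c * kernelOp a k φ x = kernelOp a (fun s => c * k s) φ x := by
  simp only [kernelOp, ← intervalIntegral.integral_const_mul, mul_assoc]

theorem riemannLiouville_eq_kernelOp (μ a : ℝ) (φ : ℝ → ℝ) (x : ℝ) :
    riemannLiouville μ a φ x = (Real.Gamma μ)⁻¹ * kernelOp a (fun s => s ^ (μ - 1)) φ x :=
  rfl

theorem continuousOn_kernelOp {a y : ℝ} {K φ : ℝ → ℝ} (hay : a ≤ y)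
    (hK : ContinuousOn K (Icc 0 (y - a))) (hφ : ContinuousOn φ (Icc a y)) :
    ContinuousOn (kernelOp a K φ) (Icc a y) := by
  obtain ⟨K', hK'c, hKK', -⟩ := hK.exists_bounded_continuous_eqOn_Icc (sub_nonneg.2 hay)
  obtain ⟨φ', hφ'c, hφφ', -⟩ := hφ.exists_bounded_continuous_eqOn_Icc hay
  have hcont : Continuous (kernelOp a K' φ') :=
    continuous_parametric_intervalIntegral_of_continuous (by fun_prop) continuous_id
  refine hcont.continuousOn.congr fun t ht => kernelOp_congr ht.1
    (hKK'.mono (Ioo_subset_Icc_self.trans (Icc_subset_Icc_right (by linarith [ht.2]))))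
    (hφφ'.mono (Ioo_subset_Icc_self.trans (Icc_subset_Icc_right ht.2)))

theorem integrable_kernelOp_integrand {f k φ : ℝ → ℝ} {C : ℝ} (hf : Integrable f)
    (hk : Integrable k) (hφ : AEStronglyMeasurable φ) (hφC : ∀ u, ‖φ u‖ ≤ C) (y : ℝ) :
    Integrable (fun p : ℝ × ℝ => f (y - p.1) * (k (p.1 - p.2) * φ p.2)) := by
  have hm : MeasurePreserving (fun p : ℝ × ℝ => (y - p.2, y - p.1)) :=
    ((Measure.measurePreserving_sub_left volume y).prod
      (Measure.measurePreserving_sub_left volume y)).comp Measure.measurePreserving_swap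
  have hfk : Integrable (fun p : ℝ × ℝ => f (y - p.1) * k (p.1 - p.2)) := by
    -- `(t, u) ↦ (y - u, y - t)` carries it to the convolution integrand `f p.2 * k (p.1 - p.2)`
    refine (hm.integrable_comp_of_integrable
      (hf.convolution_integrand (ContinuousLinearMap.mul ℝ ℝ) hk)).congr
        (ae_of_all _ fun p => ?_)
    simp
  have hφ₂ : AEStronglyMeasurable (fun p : ℝ × ℝ => φ p.2) := hφ.comp_snd
  simpa only [mul_assoc] using hfk.mul_bdd hφ₂ (ae_of_all _ fun p => hφC p.2)

theorem kernelOp_kernelOp_of_integrable {f k φ : ℝ → ℝ} {C : ℝ} (hf : Integrable f)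
    (hk : Integrable k) (hφ : AEStronglyMeasurable φ) (hφC : ∀ u, ‖φ u‖ ≤ C) {a y : ℝ}
    (hay : a ≤ y) :
    kernelOp a f (kernelOp a k φ) y = kernelOp a (kernelOp 0 f k) φ y := by
  have hswap := integral_integral_swap_triangle (F := fun t u => f (y - t) * (k (t - u) * φ u))
    hay (integrable_kernelOp_integrand hf hk hφ hφC y).integrableOn
  simp only [kernelOp, ← intervalIntegral.integral_const_mul] at hswap ⊢
  rw [hswap]
  refine integral_congr fun u _ => ?_
  have hshift := integral_comp_sub_right (fun r => f (y - u - r) * k r) (a := u) (b := y) u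
  simp only [sub_self, sub_sub_sub_cancel_right] at hshift
  rw [← hshift, ← intervalIntegral.integral_mul_const]
  simp only [mul_assoc]

theorem kernelOp_kernelOp {f k φ : ℝ → ℝ} {a y : ℝ} (hay : a ≤ y)
    (hf : IntegrableOn f (Ioo 0 (y - a))) (hk : IntegrableOn k (Ioo 0 (y - a)))
    (hφ : ContinuousOn φ (Icc a y)) :
    kernelOp a f (kernelOp a k φ) y = kernelOp a (kernelOp 0 f k) φ y := by
  set f' := (Ioo 0 (y - a)).indicator f
  set k' := (Ioo 0 (y - a)).indicator k
  have hff' : EqOn f f' (Ioo 0 (y - a)) := fun s hs => (indicator_of_mem hs f).symm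
  have hkk' : EqOn k k' (Ioo 0 (y - a)) := fun s hs => (indicator_of_mem hs k).symm
  obtain ⟨φ', hφ'c, hφφ', C, hC⟩ := hφ.exists_bounded_continuous_eqOn_Icc hay
  have hinner : EqOn (kernelOp a k φ) (kernelOp a k' φ') (Ioo a y) := fun t ht =>
    kernelOp_congr ht.1.le (hkk'.mono (Ioo_subset_Ioo_right (by linarith [ht.2])))
      (hφφ'.mono (Ioo_subset_Icc_self.trans (Icc_subset_Icc_right ht.2.le)))
  have hkernel : EqOn (kernelOp 0 f k) (kernelOp 0 f' k') (Ioo 0 (y - a)) := fun s hs =>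
    kernelOp_congr hs.1.le (hff'.mono (Ioo_subset_Ioo_right (by linarith [hs.2])))
      (hkk'.mono (Ioo_subset_Ioo_right hs.2.le))
  rw [kernelOp_congr hay hff' hinner, kernelOp_congr hay hkernel (hφφ'.mono Ioo_subset_Icc_self)]
  exact kernelOp_kernelOp_of_integrable ((integrable_indicator_iff measurableSet_Ioo).2 hf)
    ((integrable_indicator_iff measurableSet_Ioo).2 hk)
    hφ'c.aestronglyMeasurable hC hay

theorem riemannLiouville_kernelOp {ν a y : ℝ} (hν : 0 < ν) (hay : a ≤ y) {k φ : ℝ → ℝ}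
    (hk : IntegrableOn k (Ioo 0 (y - a))) (hφ : ContinuousOn φ (Icc a y)) :
    riemannLiouville ν a (kernelOp a k φ) y = kernelOp a (riemannLiouville ν 0 k) φ y := by
  have hpow : IntegrableOn (fun s : ℝ => s ^ (ν - 1)) (Ioo 0 (y - a)) :=
    (intervalIntegrable_iff_integrableOn_Ioo_of_le (sub_nonneg.2 hay)).1
      (intervalIntegrable_rpow' (by linarith))
  rw [riemannLiouville_eq_kernelOp, kernelOp_kernelOp hay hpow hk hφ, const_mul_kernelOp]
  rfl

section Leibniz

variable {a b : ℝ} {K φ : ℝ → ℝ}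

theorem kernelOp_eq_integral_kernelOp_derivWithin (hK : DifferentiableOn ℝ K (Ico 0 (b - a)))
    (hK' : ContinuousOn (derivWithin K (Ico 0 (b - a))) (Ico 0 (b - a))) (hK0 : K 0 = 0)
    (hφ : ContinuousOn φ (Icc a b)) {y : ℝ} (hy : y ∈ Ico a b) :
    kernelOp a K φ y = ∫ t in a..y, kernelOp a (derivWithin K (Ico 0 (b - a))) φ t := by
  set K' := derivWithin K (Ico 0 (b - a))
  set T := {p : ℝ × ℝ | a ≤ p.2 ∧ p.2 ≤ p.1 ∧ p.1 ≤ y}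
  have hK_eq : ∀ u ∈ uIcc a y, K (y - u) = ∫ t in u..y, K' (t - u) := fun u hu => by
    rw [uIcc_of_le hy.1] at hu
    rw [integral_comp_sub_right, sub_self, integral_derivWithin_Ico_eq_sub hK hK'
      ⟨by linarith [hu.2], by linarith [hu.1, hy.2]⟩, hK0, sub_zero]
  have hT : IsCompact T :=
    (isCompact_Icc.prod isCompact_Icc).of_isClosed_subset
      ((isClosed_le continuous_const continuous_snd).inter
        ((isClosed_le continuous_snd continuous_fst).inter
          (isClosed_le continuous_fst continuous_const)))
      (fun p hp => ⟨⟨hp.1.trans hp.2.1, hp.2.2⟩, ⟨hp.1, hp.2.1.trans hp.2.2⟩⟩)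
  have hcont : ContinuousOn (uncurry fun t u => K' (t - u) * φ u) T :=
    (hK'.comp (continuous_fst.sub continuous_snd).continuousOn fun p hp =>
        ⟨sub_nonneg.2 hp.2.1, show p.1 - p.2 < b - a by linarith [hp.1, hp.2.2, hy.2]⟩).mul
      (hφ.comp continuous_snd.continuousOn fun p hp =>
        ⟨hp.1, by linarith [hp.2.1, hp.2.2, hy.2]⟩)
  rw [kernelOp, integral_congr fun u hu => by
      rw [hK_eq u hu, ← intervalIntegral.integral_mul_const],
    ← integral_integral_swap_triangle hy.1 (hcont.integrableOn_compact hT)]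
  rfl

theorem hasDerivAt_kernelOp (hK : DifferentiableOn ℝ K (Ico 0 (b - a)))
    (hK' : ContinuousOn (derivWithin K (Ico 0 (b - a))) (Ico 0 (b - a))) (hK0 : K 0 = 0)
    (hφ : ContinuousOn φ (Icc a b)) {y : ℝ} (hy : y ∈ Ioo a b) :
    HasDerivAt (kernelOp a K φ) (kernelOp a (derivWithin K (Ico 0 (b - a))) φ y) y := by
  set K' := derivWithin K (Ico 0 (b - a))
  obtain ⟨y', hyy', hy'b⟩ := exists_between hy.2
  have hcont : ContinuousOn (kernelOp a K' φ) (Icc a y') :=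
    continuousOn_kernelOp (hy.1.trans hyy').le (hK'.mono (Icc_subset_Ico_right (by linarith)))
      (hφ.mono (Icc_subset_Icc_right hy'b.le))
  have hprim : HasDerivAt (fun z => ∫ t in a..z, kernelOp a K' φ t) (kernelOp a K' φ y) y :=
    integral_hasDerivAt_right
      ((hcont.mono (Icc_subset_Icc_right hyy'.le)).intervalIntegrable_of_Icc hy.1.le)
      ((hcont.mono Ioo_subset_Icc_self).stronglyMeasurableAtFilter isOpen_Ioo y ⟨hy.1, hyy'⟩)
      (hcont.continuousAt (Icc_mem_nhds hy.1 hyy'))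
  refine hprim.congr_of_eventuallyEq ?_
  filter_upwards [Ioo_mem_nhds hy.1 hy.2] with z hz
  exact kernelOp_eq_integral_kernelOp_derivWithin hK hK' hK0 hφ ⟨hz.1.le, hz.2⟩

end Leibniz

section Iterated

variable {a b : ℝ} {n : ℕ} {K φ : ℝ → ℝ}

theorem hasDerivAt_kernelOp_iteratedDerivWithin (hK : ContDiffOn ℝ n K (Ico 0 (b - a)))
    (hK0 : ∀ j < n, iteratedDerivWithin j K (Ico 0 (b - a)) 0 = 0)
    (hφ : ContinuousOn φ (Icc a b)) {j : ℕ} (hj : j < n) {y : ℝ} (hy : y ∈ Ioo a b) :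
    HasDerivAt (kernelOp a (iteratedDerivWithin j K (Ico 0 (b - a))) φ)
      (kernelOp a (iteratedDerivWithin (j + 1) K (Ico 0 (b - a))) φ y) y := by
  have hs := uniqueDiffOn_Ico (0 : ℝ) (b - a)
  have hK' := hK.continuousOn_iteratedDerivWithin (m := j + 1) (by exact_mod_cast hj) hs
  rw [iteratedDerivWithin_succ] at hK' ⊢
  exact hasDerivAt_kernelOp (hK.differentiableOn_iteratedDerivWithin (by exact_mod_cast hj) hs)
    hK' (hK0 j hj) hφ hy

theorem iteratedDeriv_kernelOp (hK : ContDiffOn ℝ n K (Ico 0 (b - a)))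
    (hK0 : ∀ j < n, iteratedDerivWithin j K (Ico 0 (b - a)) 0 = 0)
    (hφ : ContinuousOn φ (Icc a b)) :
    ∀ j ≤ n, EqOn (iteratedDeriv j (kernelOp a K φ))
      (kernelOp a (iteratedDerivWithin j K (Ico 0 (b - a))) φ) (Ioo a b)
  | 0, _ => fun y _ => by simp
  | j + 1, hj => fun y hy => by
    rw [iteratedDeriv_succ]
    exact ((hasDerivAt_kernelOp_iteratedDerivWithin hK hK0 hφ hj hy).congr_of_eventuallyEq
      (eventuallyEq_of_mem (Ioo_mem_nhds hy.1 hy.2)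
        (iteratedDeriv_kernelOp hK hK0 hφ j (Nat.le_of_succ_le hj)))).deriv

theorem hasDerivAt_iteratedDeriv_kernelOp (hK : ContDiffOn ℝ n K (Ico 0 (b - a)))
    (hK0 : ∀ j < n, iteratedDerivWithin j K (Ico 0 (b - a)) 0 = 0)
    (hφ : ContinuousOn φ (Icc a b)) {j : ℕ} (hj : j < n) {y : ℝ} (hy : y ∈ Ioo a b) :
    HasDerivAt (iteratedDeriv j (kernelOp a K φ))
      (kernelOp a (iteratedDerivWithin (j + 1) K (Ico 0 (b - a))) φ y) y :=
  (hasDerivAt_kernelOp_iteratedDerivWithin hK hK0 hφ hj hy).congr_of_eventuallyEq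
    (eventuallyEq_of_mem (Ioo_mem_nhds hy.1 hy.2) (iteratedDeriv_kernelOp hK hK0 hφ j hj.le))

end Iterated

theorem riemannLiouville_deriv_of_kernelOp_general (a b μ : ℝ)
    (n : ℕ) (hn : n = Nat.floor μ + 1) (k κ φ : ℝ → ℝ)
    (hk : IntegrableOn k (Ioo 0 (b - a)))
    (hκeq : ∀ s ∈ Ioo 0 (b - a),
      κ s = (Real.Gamma ((n : ℝ) - μ))⁻¹ *
        ∫ r in (0:ℝ)..s, (s - r) ^ ((n : ℝ) - μ - 1) * k r)
    (hκsm : ContDiffOn ℝ n κ (Ico 0 (b - a)))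
    (hκ0 : ∀ j < n, iteratedDerivWithin j κ (Ico 0 (b - a)) 0 = 0)
    (hφ : ContinuousOn φ (Icc a b)) :
    ∀ x ∈ Ioo a b,
      (∀ j < n, DifferentiableAt ℝ
        (iteratedDeriv j (fun y => riemannLiouville ((n : ℝ) - μ) a (kernelOp a k φ) y)) x) ∧
      iteratedDeriv n (fun y => riemannLiouville ((n : ℝ) - μ) a (kernelOp a k φ) y) x
        = ∫ u in a..x, iteratedDerivWithin n κ (Ico 0 (b - a)) (x - u) * φ u := by
  intro x hx
  have hν : 0 < (n : ℝ) - μ := by rw [hn]; push_cast; linarith [Nat.lt_floor_add_one μ]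
  have hF : (fun y => riemannLiouville ((n : ℝ) - μ) a (kernelOp a k φ) y) =ᶠ[𝓝 x]
      kernelOp a κ φ := by
    filter_upwards [Ioo_mem_nhds hx.1 hx.2] with y hy
    have hsub : Ioo 0 (y - a) ⊆ Ioo 0 (b - a) := Ioo_subset_Ioo_right (by linarith [hy.2])
    rw [riemannLiouville_kernelOp hν hy.1.le (hk.mono_set hsub)
      (hφ.mono (Icc_subset_Icc_right hy.2.le))]
    exact kernelOp_congr hy.1.le (fun s hs => (hκeq s (hsub hs)).symm) (fun _ _ => rfl)
  refine ⟨fun j hj => ?_, ?_⟩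
  · exact (hasDerivAt_iteratedDeriv_kernelOp hκsm hκ0 hφ hj hx).differentiableAt
      |>.congr_of_eventuallyEq (hF.iteratedDeriv j)
  · rw [(hF.iteratedDeriv n).eq_of_nhds]
    exact iteratedDeriv_kernelOp hκsm hκ0 hφ n le_rfl hx

/-- Kernel form of Theorem 3: the Riemann–Liouville fractional derivative
`(D^μ_{a+} f)(x) = (d/dx)^n (I^{n−μ}_{a+} f)(x)`, `n = ⌊μ⌋ + 1`, of the kernel operator
`K_k` is the kernel operator with the fractionally differentiated kernel `κ⁽ⁿ⁾`. -/
theorem riemannLiouville_deriv_of_kernelOp (a b μ : ℝ) (hab : a < b) (hμ : 0 < μ)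
    (n : ℕ) (hn : n = Nat.floor μ + 1) (k κ φ : ℝ → ℝ)
    (hk : IntegrableOn k (Ioo 0 (b - a)))
    (hκeq : ∀ s ∈ Ioo 0 (b - a),
      κ s = (Real.Gamma ((n : ℝ) - μ))⁻¹ *
        ∫ r in (0:ℝ)..s, (s - r) ^ ((n : ℝ) - μ - 1) * k r)
    (hκsm : ContDiffOn ℝ n κ (Ico 0 (b - a)))
    (hκ0 : ∀ j < n, iteratedDerivWithin j κ (Ico 0 (b - a)) 0 = 0)
    (hφ : ContinuousOn φ (Icc a b)) :
    ∀ x ∈ Ioo a b,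
      (∀ j < n, DifferentiableAt ℝ
        (iteratedDeriv j (fun y => riemannLiouville ((n : ℝ) - μ) a (kernelOp a k φ) y)) x) ∧
      iteratedDeriv n (fun y => riemannLiouville ((n : ℝ) - μ) a (kernelOp a k φ) y) x
        = ∫ u in a..x, iteratedDerivWithin n κ (Ico 0 (b - a)) (x - u) * φ u :=
  riemannLiouville_deriv_of_kernelOp_general a b μ n hn k κ φ hk hκeq hκsm hκ0 hφ
end

section
/- Let n ≥ 1 be a natural number, a < b real numbers, let k : [0, b−a) → ℝ be n-times continuously differentiable with k^{(j)}(0) = 0 for all 0 ≤ j ≤ n−1, and let φ : [a,b] → ℝ be continuous. Then the function F(x) = ∫_a^x k(x−t) φ(t) dt is n times differentiable on (a,b) and F^{(n)}(x) = ∫_a^x k^{(n)}(x−t) φ(t) dt for all x ∈ (a,b). (The differentiation-under-the-integral step (step12) used in the proof of the paper's Theorem 3.) -/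
/-! Since `g 0 = 0`, for `g = k⁽ʲ⁾` with `j < n` we have `g (u - t) = ∫ v in t..u, g' (v - t)`.
Swapping the integrals over the triangle `a ≤ t ≤ v ≤ u` shows that
`u ↦ ∫ t in a..u, g (u - t) * φ t` is a primitive of `v ↦ ∫ t in a..v, g' (v - t) * φ t`, and
iterating this over `j` gives all derivatives. Near a point `y < b` only the values of `g` on
`[0, c - a]` and of `φ` on `[a, c]` matter for some `c ∈ (y, b)`, so both may be replaced by
continuous functions on `ℝ`. -/

open MeasureTheory Set Filter Function

theorem integral_integral_triangle_swap {E : Type*} [NormedAddCommGroup E] [NormedSpace ℝ E]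
    {f : ℝ → ℝ → E} (hf : Continuous (uncurry f)) {a u : ℝ} (hau : a ≤ u) :
    ∫ t in a..u, ∫ v in t..u, f t v = ∫ v in a..u, ∫ t in a..v, f t v := by
  set g := {p : ℝ × ℝ | p.1 < p.2}.indicator (uncurry f)
  have hint : Integrable (uncurry fun t v => g (t, v))
      ((volume.restrict (Ioc a u)).prod (volume.restrict (Ioc a u))) := by
    rw [Measure.prod_restrict]
    exact ((hf.continuousOn.integrableOn_compact (isCompact_Icc.prod isCompact_Icc)).mono_set
      (prod_mono Ioc_subset_Icc_self Ioc_subset_Icc_self)).indicator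
      (measurableSet_lt measurable_fst measurable_snd)
  calc ∫ t in a..u, ∫ v in t..u, f t v
      = ∫ t in Ioc a u, ∫ v in Ioc a u, g (t, v) := by
        rw [intervalIntegral.integral_of_le hau]
        refine setIntegral_congr_fun measurableSet_Ioc fun t ht => ?_
        have hslice : (fun v => g (t, v)) = (Ioi t).indicator (f t) := by
          ext v; simp [g, indicator]
        rw [hslice, setIntegral_indicator measurableSet_Ioi, Ioc_inter_Ioi,
          sup_eq_right.2 ht.1.le, intervalIntegral.integral_of_le ht.2]
    _ = ∫ v in Ioc a u, ∫ t in Ioc a u, g (t, v) := integral_integral_swap hint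
    _ = ∫ v in a..u, ∫ t in a..v, f t v := by
        rw [intervalIntegral.integral_of_le hau]
        refine setIntegral_congr_fun measurableSet_Ioc fun v hv => ?_
        have hslice : (fun t => g (t, v)) = (Iio v).indicator (f · v) := by
          ext t; simp [g, indicator]
        have hIoo : Ioc a u ∩ Iio v = Ioo a v := by
          ext t
          simp only [mem_inter_iff, mem_Ioc, mem_Iio, mem_Ioo]
          exact ⟨fun h => ⟨h.1.1, h.2⟩, fun h => ⟨⟨h.1, h.2.le.trans hv.2⟩, h.2⟩⟩
        rw [hslice, setIntegral_indicator measurableSet_Iio, hIoo,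
          intervalIntegral.integral_of_le hv.1.le, integral_Ioc_eq_integral_Ioo]

theorem ContinuousOn.exists_continuous_eqOn_Icc {α β : Type*} [LinearOrder α]
    [TopologicalSpace α] [OrderTopology α] [TopologicalSpace β] {f : α → β} {a b : α}
    (hab : a ≤ b) (hf : ContinuousOn f (Icc a b)) :
    ∃ g : α → β, Continuous g ∧ EqOn g f (Icc a b) :=
  ⟨IccExtend hab ((Icc a b).domRestrict f), hf.domRestrict.Icc_extend',
    fun _ hx => IccExtend_of_mem _ _ hx⟩

theorem integral_eq_sub_of_hasDerivWithinAt_Ico {E : Type*} [NormedAddCommGroup E]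
    [NormedSpace ℝ E] [CompleteSpace E] {f f' : ℝ → E} {a b x : ℝ}
    (hd : ∀ s ∈ Ico a b, HasDerivWithinAt f (f' s) (Ico a b) s)
    (hf' : ContinuousOn f' (Ico a b)) (hx : x ∈ Ico a b) :
    ∫ s in a..x, f' s = f x - f a := by
  have hsub : Icc a x ⊆ Ico a b := Icc_subset_Ico_right hx.2
  refine intervalIntegral.integral_eq_sub_of_hasDerivAt_of_le hx.1
    (fun s hs => (hd s (hsub hs)).continuousWithinAt.mono hsub) (fun s hs => ?_)
    ((hf'.mono hsub).intervalIntegrable_of_Icc hx.1)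
  exact (hd s (hsub (Ioo_subset_Icc_self hs))).hasDerivAt (Ico_mem_nhds hs.1 (hs.2.trans hx.2))

theorem hasDerivAt_integral_integral_sub_mul {g φ : ℝ → ℝ} (hg : Continuous g)
    (hφ : Continuous φ) {a y : ℝ} (hay : a < y) :
    HasDerivAt (fun u => ∫ t in a..u, (∫ s in (0 : ℝ)..u - t, g s) * φ t)
      (∫ t in a..y, g (y - t) * φ t) y := by
  set H := fun v => ∫ t in a..v, g (v - t) * φ t
  have hH : Continuous H :=
    intervalIntegral.continuous_parametric_intervalIntegral_of_continuous (by fun_prop)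
      continuous_id
  have hprimitive : ∀ u, a ≤ u →
      ∫ t in a..u, (∫ s in (0 : ℝ)..u - t, g s) * φ t = ∫ v in a..u, H v := fun u hau =>
    calc ∫ t in a..u, (∫ s in (0 : ℝ)..u - t, g s) * φ t
        = ∫ t in a..u, ∫ v in t..u, g (v - t) * φ t := by
          congr 1; ext t
          rw [intervalIntegral.integral_mul_const, intervalIntegral.integral_comp_sub_right,
            sub_self]
      _ = ∫ v in a..u, H v := integral_integral_triangle_swap (by fun_prop) hau
  exact (hH.integral_hasStrictDerivAt a y).hasDerivAt.congr_of_eventuallyEq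
    (eventually_of_mem (Ici_mem_nhds hay) hprimitive)

theorem hasDerivAt_integral_sub_mul {g g' φ : ℝ → ℝ} {a b y : ℝ}
    (hd : ∀ s ∈ Ico 0 (b - a), HasDerivWithinAt g (g' s) (Ico 0 (b - a)) s)
    (hg' : ContinuousOn g' (Ico 0 (b - a))) (hg0 : g 0 = 0) (hφ : ContinuousOn φ (Icc a b))
    (hy : y ∈ Ioo a b) :
    HasDerivAt (fun u => ∫ t in a..u, g (u - t) * φ t) (∫ t in a..y, g' (y - t) * φ t) y := by
  obtain ⟨hay, hyb⟩ := hy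
  obtain ⟨c, hyc, hcb⟩ := exists_between hyb
  have hsub : Icc 0 (c - a) ⊆ Ico 0 (b - a) := Icc_subset_Ico_right (by linarith)
  obtain ⟨g₁, hg₁, hg₁g'⟩ := (hg'.mono hsub).exists_continuous_eqOn_Icc (by linarith)
  obtain ⟨φ₁, hφ₁, hφ₁φ⟩ := hφ.exists_continuous_eqOn_Icc (hay.trans hyb).le
  have hlocal : ∀ u ∈ Ioo a c,
      ∫ t in a..u, (∫ s in (0 : ℝ)..u - t, g₁ s) * φ₁ t = ∫ t in a..u, g (u - t) * φ t := by
    intro u hu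
    refine intervalIntegral.integral_congr fun t ht => ?_
    rw [uIcc_of_le hu.1.le] at ht
    have hut : u - t ∈ Icc 0 (c - a) := ⟨by linarith [ht.2], by linarith [ht.1, hu.2]⟩
    have hg₁ : ∫ s in (0 : ℝ)..u - t, g₁ s = g (u - t) := by
      rw [intervalIntegral.integral_congr (g := g') fun s hs => ?_,
        integral_eq_sub_of_hasDerivWithinAt_Ico hd hg' ⟨hut.1, by linarith [hut.2]⟩, hg0, sub_zero]
      rw [uIcc_of_le hut.1] at hs
      exact hg₁g' ⟨hs.1, hs.2.trans hut.2⟩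
    rw [hg₁, hφ₁φ ⟨ht.1, by linarith [ht.2, hu.2]⟩]
  have hvalue : ∫ t in a..y, g₁ (y - t) * φ₁ t = ∫ t in a..y, g' (y - t) * φ t := by
    refine intervalIntegral.integral_congr fun t ht => ?_
    rw [uIcc_of_le hay.le] at ht
    rw [hg₁g' ⟨by linarith [ht.2], by linarith [ht.1]⟩, hφ₁φ ⟨ht.1, by linarith [ht.2]⟩]
  rw [← hvalue]
  exact (hasDerivAt_integral_integral_sub_mul hg₁ hφ₁ hay).congr_of_eventuallyEq
    (eventually_of_mem (Ioo_mem_nhds hay hyc) fun u hu => (hlocal u hu).symm)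

section IteratedDeriv

variable {E : Type*} [NormedAddCommGroup E] [NormedSpace ℝ E] {f : ℕ → ℝ → E} {U : Set ℝ} {n : ℕ}

theorem eqOn_iteratedDeriv_of_hasDerivAt (hU : IsOpen U)
    (hf : ∀ j < n, ∀ x ∈ U, HasDerivAt (f j) (f (j + 1) x) x) :
    ∀ j ≤ n, EqOn (iteratedDeriv j (f 0)) (f j) U := by
  intro j
  induction j with
  | zero => intro _ x _; simp
  | succ j ih =>
    intro hj x hx
    rw [iteratedDeriv_succ]
    exact ((hf j hj x hx).congr_of_eventuallyEq
      (eventuallyEq_of_mem (hU.mem_nhds hx) (ih (j.le_succ.trans hj)))).deriv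

theorem hasDerivAt_iteratedDeriv_of_hasDerivAt (hU : IsOpen U)
    (hf : ∀ j < n, ∀ x ∈ U, HasDerivAt (f j) (f (j + 1) x) x) {j : ℕ} (hj : j < n) {x : ℝ}
    (hx : x ∈ U) : HasDerivAt (iteratedDeriv j (f 0)) (f (j + 1) x) x :=
  (hf j hj x hx).congr_of_eventuallyEq
    (eventuallyEq_of_mem (hU.mem_nhds hx) (eqOn_iteratedDeriv_of_hasDerivAt hU hf j hj.le))

end IteratedDeriv

theorem ContDiffOn.hasDerivWithinAt_iteratedDerivWithin {𝕜 F : Type*} [NontriviallyNormedField 𝕜]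
    [NormedAddCommGroup F] [NormedSpace 𝕜 F] {f : 𝕜 → F} {s : Set 𝕜} {n j : ℕ} {x : 𝕜}
    (hf : ContDiffOn 𝕜 n f s) (hs : UniqueDiffOn 𝕜 s) (hj : j < n) (hx : x ∈ s) :
    HasDerivWithinAt (iteratedDerivWithin j f s) (iteratedDerivWithin (j + 1) f s x) s x := by
  rw [iteratedDerivWithin_succ]
  exact (hf.differentiableOn_iteratedDerivWithin (mod_cast hj) hs x hx).hasDerivWithinAt

theorem deriv_under_integral_general (n : ℕ) (a b : ℝ)
    (k φ : ℝ → ℝ)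
    (hk : ContDiffOn ℝ n k (Ico 0 (b - a)))
    (hk0 : ∀ j < n, iteratedDerivWithin j k (Ico 0 (b - a)) 0 = 0)
    (hφ : ContinuousOn φ (Icc a b)) :
    ∀ x ∈ Ioo a b,
      (∀ j < n, DifferentiableAt ℝ
        (iteratedDeriv j (fun y => ∫ t in a..y, k (y - t) * φ t)) x) ∧
      iteratedDeriv n (fun y => ∫ t in a..y, k (y - t) * φ t) x
        = ∫ t in a..x, iteratedDerivWithin n k (Ico 0 (b - a)) (x - t) * φ t := by
  intro x hx
  set f : ℕ → ℝ → ℝ :=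
    fun j u => ∫ t in a..u, iteratedDerivWithin j k (Ico 0 (b - a)) (u - t) * φ t
  have hf0 : f 0 = fun y => ∫ t in a..y, k (y - t) * φ t := by simp [f]
  have hstep : ∀ j < n, ∀ y ∈ Ioo a b, HasDerivAt (f j) (f (j + 1) y) y := fun j hj _ hy =>
    hasDerivAt_integral_sub_mul
      (fun _ hs => hk.hasDerivWithinAt_iteratedDerivWithin (uniqueDiffOn_Ico _ _) hj hs)
      (hk.continuousOn_iteratedDerivWithin (mod_cast hj) (uniqueDiffOn_Ico _ _)) (hk0 j hj) hφ hy
  rw [← hf0]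
  exact ⟨fun _ hj =>
      (hasDerivAt_iteratedDeriv_of_hasDerivAt isOpen_Ioo hstep hj hx).differentiableAt,
    eqOn_iteratedDeriv_of_hasDerivAt isOpen_Ioo hstep n le_rfl hx⟩

/-- Differentiation under the integral sign (step12 in the proof of Theorem 3):
if `k` is `n`-times continuously differentiable on `[0, b−a)` with vanishing derivatives
of order `< n` at `0`, and `φ` is continuous on `[a,b]`, then
`F(x) = ∫_a^x k(x−t) φ(t) dt` is `n` times differentiable on `(a,b)` with
`F⁽ⁿ⁾(x) = ∫_a^x k⁽ⁿ⁾(x−t) φ(t) dt`. -/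
theorem deriv_under_integral (n : ℕ) (hn : 1 ≤ n) (a b : ℝ) (hab : a < b)
    (k φ : ℝ → ℝ)
    (hk : ContDiffOn ℝ n k (Ico 0 (b - a)))
    (hk0 : ∀ j < n, iteratedDerivWithin j k (Ico 0 (b - a)) 0 = 0)
    (hφ : ContinuousOn φ (Icc a b)) :
    ∀ x ∈ Ioo a b,
      (∀ j < n, DifferentiableAt ℝ
        (iteratedDeriv j (fun y => ∫ t in a..y, k (y - t) * φ t)) x) ∧
      iteratedDeriv n (fun y => ∫ t in a..y, k (y - t) * φ t) x
        = ∫ t in a..x, iteratedDerivWithin n k (Ico 0 (b - a)) (x - t) * φ t :=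
  deriv_under_integral_general n a b k φ hk hk0 hφ
end
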